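/- Let (W, S) be a Coxeter system with length function ℓ, and let σ be a group automorphism of W with σ(S) = S. If w ∈ W is σ-straight and w′ = x w σ(x)⁻¹ is a σ-conjugate of w with ℓ(w′) = ℓ(w), then w′ is also σ-straight. -/

import Mathlib

/-- For an automorphism `σ` of a group `W` and `w ∈ W`, the twisted product
`g_m(w) = w · σ(w) · σ²(w) ⋯ σ^{m−1}(w)`. -/
def twistProd {W : Type*} [Group W] (σ : W → W) (w : W) (m : ℕ) : W :=
  ((List.range m).map fun i => σ^[i] w).prod

/-!
Since `σ` permutes `S`, it preserves length. Conjugating `w` by `x` multiplies every twisted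
product `g_n` by `x` and `σⁿ(x)⁻¹`, so `ℓ(g_n(w)) ≤ ℓ(g_n(w')) + 2ℓ(x)` for all `n`. On the other
hand `ℓ(g_{mk}(w')) ≤ k ℓ(g_m(w'))`.
If `ℓ(g_m(w')) < m ℓ(w') = m ℓ(w)`, taking `k = 2ℓ(x) + 1` these give
`mk ℓ(w) = ℓ(g_{mk}(w)) ≤ k (m ℓ(w) - 1) + 2ℓ(x) < mk ℓ(w)`.
-/

section TwistProd

variable {W F : Type*} [Group W]

@[simp]
lemma twistProd_zero (σ : W → W) (w : W) : twistProd σ w 0 = 1 := rfl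

lemma twistProd_succ (σ : W → W) (w : W) (m : ℕ) :
    twistProd σ w (m + 1) = twistProd σ w m * σ^[m] w := by
  simp [twistProd, List.range_succ]

variable [FunLike F W W] [MonoidHomClass F W W]

lemma twistProd_add (σ : F) (w : W) (m n : ℕ) :
    twistProd σ w (m + n) = twistProd σ w m * σ^[m] (twistProd σ w n) := by
  induction n with
  | zero => simp
  | succ n ih =>
    rw [← add_assoc, twistProd_succ, twistProd_succ, ih, iterate_map_mul, mul_assoc,
      Function.iterate_add_apply]

lemma twistProd_conj (σ : F) (w x : W) (m : ℕ) :
    twistProd σ (x * w * (σ x)⁻¹) m = x * twistProd σ w m * (σ^[m] x)⁻¹ := by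
  induction m with
  | zero => simp
  | succ m ih =>
    rw [twistProd_succ, twistProd_succ, ih, iterate_map_mul, iterate_map_mul, iterate_map_inv,
      ← Function.iterate_succ_apply]
    group

end TwistProd

namespace CoxeterSystem

variable {B W F : Type*} [Group W] {M : CoxeterMatrix B} (cs : CoxeterSystem M W)
  [FunLike F W W]

lemma length_map_wordProd_le [MonoidHomClass F W W] {φ : F}
    (hφ : Set.MapsTo φ (Set.range cs.simple) (Set.range cs.simple)) (ω : List B) :
    cs.length (φ (cs.wordProd ω)) ≤ ω.length := by
  induction ω with
  | nil => simp
  | cons i ω ih =>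
    obtain ⟨j, hj⟩ := hφ (Set.mem_range_self i)
    calc cs.length (φ (cs.wordProd (i :: ω)))
        ≤ cs.length (φ (cs.simple i)) + cs.length (φ (cs.wordProd ω)) := by
          rw [wordProd_cons, map_mul]; exact cs.length_mul_le _ _
      _ ≤ (i :: ω).length := by rw [← hj, length_simple, List.length_cons]; omega

lemma length_map_le [MonoidHomClass F W W] {φ : F}
    (hφ : Set.MapsTo φ (Set.range cs.simple) (Set.range cs.simple)) (w : W) :
    cs.length (φ w) ≤ cs.length w := by
  obtain ⟨ω, hω, rfl⟩ := cs.exists_isReduced w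
  rw [hω.eq]
  exact cs.length_map_wordProd_le hφ ω

variable {cs} {σ : F} (hσ : ∀ v, cs.length (σ v) ≤ cs.length v)
include hσ

lemma length_iterate_le (n : ℕ) (v : W) : cs.length (σ^[n] v) ≤ cs.length v := by
  induction n with
  | zero => rfl
  | succ n ih => rw [Function.iterate_succ_apply']; exact (hσ _).trans ih

lemma length_twistProd_le (w : W) (m : ℕ) :
    cs.length (twistProd σ w m) ≤ m * cs.length w := by
  induction m with
  | zero => simp
  | succ m ih =>
    calc cs.length (twistProd σ w (m + 1))
        ≤ cs.length (twistProd σ w m) + cs.length (σ^[m] w) := by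
          rw [twistProd_succ]; exact cs.length_mul_le _ _
      _ ≤ m * cs.length w + cs.length w := add_le_add ih (length_iterate_le hσ m w)
      _ = (m + 1) * cs.length w := by ring

lemma length_twistProd_mul_le [MonoidHomClass F W W] (w : W) (m k : ℕ) :
    cs.length (twistProd σ w (m * k)) ≤ k * cs.length (twistProd σ w m) := by
  induction k with
  | zero => simp
  | succ k ih =>
    calc cs.length (twistProd σ w (m * (k + 1)))
        ≤ cs.length (twistProd σ w (m * k)) + cs.length (σ^[m * k] (twistProd σ w m)) := by
          rw [mul_add_one, twistProd_add]; exact cs.length_mul_le _ _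
      _ ≤ k * cs.length (twistProd σ w m) + cs.length (twistProd σ w m) :=
          add_le_add ih (length_iterate_le hσ _ _)
      _ = (k + 1) * cs.length (twistProd σ w m) := by ring

lemma length_twistProd_le_length_twistProd_conj_add [MonoidHomClass F W W]
    (w x : W) (m : ℕ) :
    cs.length (twistProd σ w m)
      ≤ cs.length (twistProd σ (x * w * (σ x)⁻¹) m) + 2 * cs.length x := by
  have hconj : twistProd σ w m = x⁻¹ * twistProd σ (x * w * (σ x)⁻¹) m * σ^[m] x := by
    rw [twistProd_conj]; group
  have h₁ := cs.length_mul_le (x⁻¹ * twistProd σ (x * w * (σ x)⁻¹) m) (σ^[m] x)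
  have h₂ := cs.length_mul_le x⁻¹ (twistProd σ (x * w * (σ x)⁻¹) m)
  have h₃ := length_iterate_le hσ m x
  rw [cs.length_inv] at h₂
  rw [hconj]
  omega

end CoxeterSystem

open CoxeterSystem

/-- If `(W, S)` is a Coxeter system, `σ` an automorphism of `W` with `σ(S) = S`,
`w` is `σ`-straight and `w' = x w σ(x)⁻¹` is a `σ`-conjugate of `w` with
`ℓ(w') = ℓ(w)`, then `w'` is also `σ`-straight. -/
theorem straight_of_conjugate_same_length {B W : Type*} [Group W] {M : CoxeterMatrix B}
    (cs : CoxeterSystem M W) (σ : W ≃* W)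
    (hσS : ⇑σ '' Set.range cs.simple = Set.range cs.simple)
    (w : W)
    (hw : ∀ m : ℕ, 1 ≤ m → cs.length (twistProd σ w m) = m * cs.length w)
    (x : W) (w' : W) (hw' : w' = x * w * (σ x)⁻¹)
    (hlen : cs.length w' = cs.length w) :
    ∀ m : ℕ, 1 ≤ m → cs.length (twistProd σ w' m) = m * cs.length w' := by
  intro m hm
  have hσ : ∀ v, cs.length (σ v) ≤ cs.length v :=
    cs.length_map_le (Set.mapsTo_iff_image_subset.2 hσS.le)
  set k := 2 * cs.length x + 1
  have hupper := length_twistProd_le hσ w' m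
  have hlower : m * k * cs.length w ≤ k * cs.length (twistProd σ w' m) + 2 * cs.length x := by
    rw [← hw (m * k) (Nat.one_le_iff_ne_zero.mpr (by positivity)), hw']
    exact (length_twistProd_le_length_twistProd_conj_add hσ w x _).trans
      (Nat.add_le_add_right (length_twistProd_mul_le hσ _ m k) _)
  rw [hlen] at hupper ⊢
  refine le_antisymm hupper (le_of_not_gt fun hlt => ?_)
  have hk : k = 2 * cs.length x + 1 := rfl
  have hstrict : k * (cs.length (twistProd σ w' m) + 1) ≤ k * (m * cs.length w) :=
    Nat.mul_le_mul_left k hlt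
  linarith
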